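/- Let φ : X → Y be a continuous surjection between Hausdorff spaces with X locally compact. Then φ is semi-open if and only if the preimage φ⁻¹[A] of every dense subset A of Y is dense in X. -/

import Mathlib

/-!
If `φ` is semi-open, every nonempty open `U` has an image with nonempty interior, which meets
any dense `A`, so `U` meets `φ ⁻¹' A`. Conversely, if `φ '' U` has empty interior then its
complement is dense, and its preimage is a dense set missing `U`, so the open set `U` is empty.
-/

/-- A continuous surjection `g : A → B` is *semi-open* if for every nonempty open set
`U ⊆ A`, the interior of the image `g '' U` is nonempty. -/
def SemiOpen {A B : Type*} [TopologicalSpace A] [TopologicalSpace B] (g : A → B) : Prop :=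
  ∀ U : Set A, IsOpen U → U.Nonempty → (interior (g '' U)).Nonempty

section

variable {X Y : Type*} [TopologicalSpace X] [TopologicalSpace Y] {φ : X → Y}

theorem SemiOpen.dense_preimage (hφ : SemiOpen φ) {A : Set Y} (hA : Dense A) :
    Dense (φ ⁻¹' A) := by
  refine dense_iff_inter_open.mpr fun U hU hne => ?_
  obtain ⟨_, hyU, hyA⟩ := hA.inter_open_nonempty _ isOpen_interior (hφ U hU hne)
  obtain ⟨x, hxU, rfl⟩ := interior_subset hyU
  exact ⟨x, hxU, hyA⟩

theorem semiOpen_of_dense_preimage (h : ∀ A : Set Y, Dense A → Dense (φ ⁻¹' A)) :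
    SemiOpen φ := by
  intro U hU hne
  by_contra! hempty
  have hpre : Dense (φ ⁻¹' (φ '' U)ᶜ) := h _ (interior_eq_empty_iff_dense_compl.mp hempty)
  have hUc : Dense Uᶜ := hpre.mono (Set.compl_subset_compl.mpr (Set.subset_preimage_image φ U))
  exact hne.ne_empty (hU.interior_eq ▸ interior_eq_empty_iff_dense_compl.mpr hUc)

end

theorem semiOpen_iff_preimage_dense
    {X Y : Type*} [TopologicalSpace X]
    [TopologicalSpace Y]
    {φ : X → Y} :
    SemiOpen φ ↔ ∀ A : Set Y, Dense A → Dense (φ ⁻¹' A) :=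
  ⟨fun hφ _ hA => hφ.dense_preimage hA, semiOpen_of_dense_preimage⟩
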